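/- Let $\delta \in (0,1]$, and define $\epsilon_k = \frac{2\sqrt{\min_j |h_j|^2 P_j}}{\sqrt{\sum_{j=1}^K |h_j|^2 \beta_j P_j + \sigma_m^2}}\sqrt{2\log(1.25/\delta)}$. If $\beta_j \ge \beta_{\min} > 0$ for all $j$ and $|h_j|^2 P_j \ge m_{\min} > 0$, then $\epsilon_k \le \frac{1}{\sqrt{K}} \cdot \frac{2\sqrt{\min_j |h_j|^2 P_j}}{\sqrt{\min_j |h_j|^2 \beta_j P_j}}\sqrt{2\log(1.25/\delta)}$, i.e., the per-user privacy leakage is $O(1/\sqrt{K})$. -/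

import Mathlib

open Finset

theorem Finset.card_mul_inf'_le_sum {ι R : Type*} [Semiring R] [LinearOrder R]
    [IsOrderedAddMonoid R] (s : Finset ι) (H : s.Nonempty) (f : ι → R) :
    (#s : R) * s.inf' H f ≤ ∑ i ∈ s, f i := by
  simpa only [nsmul_eq_mul] using s.card_nsmul_le_sum f _ fun i hi => s.inf'_le f hi

theorem div_sqrt_le_inv_sqrt_mul_div_sqrt {c n m S : ℝ} (hc : 0 ≤ c) (hn : 0 < n) (hm : 0 < m)
    (hS : n * m ≤ S) : c / √S ≤ 1 / √n * (c / √m) := by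
  have hden : √n * √m ≤ √S := by
    rw [← Real.sqrt_mul hn.le]
    exact Real.sqrt_le_sqrt hS
  calc c / √S ≤ c / (√n * √m) := by gcongr
    _ = 1 / √n * (c / √m) := by field_simp

theorem stmt_3_general (K : ℕ) (hK : 0 < K) (h : Fin K → ℂ)
    (P : Fin K → ℝ) (β : Fin K → ℝ)
    (σm2 : ℝ) (hσ : 0 ≤ σm2)
    (δ : ℝ)
    (βmin mmin : ℝ) (hβmin : 0 < βmin) (hβlb : ∀ j, βmin ≤ β j)
    (hmmin : 0 < mmin) (hmlb : ∀ j, mmin ≤ ‖h j‖ ^ 2 * P j)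
    (εk : ℝ)
    (hεk : εk = 2 * Real.sqrt (Finset.univ.inf'
        (Finset.univ_nonempty_iff.2 ⟨⟨0, hK⟩⟩) (fun j => ‖h j‖ ^ 2 * P j)) /
      Real.sqrt (∑ j, ‖h j‖ ^ 2 * β j * P j + σm2) *
      Real.sqrt (2 * Real.log (1.25 / δ))) :
    εk ≤ (1 / Real.sqrt K) *
      (2 * Real.sqrt (Finset.univ.inf'
        (Finset.univ_nonempty_iff.2 ⟨⟨0, hK⟩⟩) (fun j => ‖h j‖ ^ 2 * P j)) /
      Real.sqrt (Finset.univ.inf'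
        (Finset.univ_nonempty_iff.2 ⟨⟨0, hK⟩⟩) (fun j => ‖h j‖ ^ 2 * β j * P j))) *
      Real.sqrt (2 * Real.log (1.25 / δ)) := by
  set H : (univ : Finset (Fin K)).Nonempty := univ_nonempty_iff.2 ⟨⟨0, hK⟩⟩
  have hinf_pos : 0 < univ.inf' H fun j => ‖h j‖ ^ 2 * β j * P j := by
    refine (lt_inf'_iff H).2 fun j _ => ?_
    have hgain : 0 < ‖h j‖ ^ 2 * P j := hmmin.trans_le (hmlb j)
    have hβj : 0 < β j := hβmin.trans_le (hβlb j)
    nlinarith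
  have hsum : (K : ℝ) * univ.inf' H (fun j => ‖h j‖ ^ 2 * β j * P j)
      ≤ ∑ j, ‖h j‖ ^ 2 * β j * P j + σm2 := by
    have := univ.card_mul_inf'_le_sum H fun j => ‖h j‖ ^ 2 * β j * P j
    rw [card_univ, Fintype.card_fin] at this
    linarith
  rw [hεk]
  gcongr
  exact div_sqrt_le_inv_sqrt_mul_div_sqrt (by positivity) (by exact_mod_cast hK) hinf_pos hsum

theorem stmt_3 (K : ℕ) (hK : 0 < K) (h : Fin K → ℂ) (hh : ∀ j, h j ≠ 0)
    (P : Fin K → ℝ) (hP : ∀ j, 0 < P j) (β : Fin K → ℝ)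
    (hβ1 : ∀ j, β j ≤ 1) (σm2 : ℝ) (hσ : 0 ≤ σm2)
    (δ : ℝ) (hδ : 0 < δ ∧ δ ≤ 1)
    (βmin mmin : ℝ) (hβmin : 0 < βmin) (hβlb : ∀ j, βmin ≤ β j)
    (hmmin : 0 < mmin) (hmlb : ∀ j, mmin ≤ ‖h j‖ ^ 2 * P j)
    (k : Fin K) (εk : ℝ)
    (hεk : εk = 2 * Real.sqrt (Finset.univ.inf'
        (Finset.univ_nonempty_iff.2 ⟨⟨0, hK⟩⟩) (fun j => ‖h j‖ ^ 2 * P j)) /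
      Real.sqrt (∑ j, ‖h j‖ ^ 2 * β j * P j + σm2) *
      Real.sqrt (2 * Real.log (1.25 / δ))) :
    εk ≤ (1 / Real.sqrt K) *
      (2 * Real.sqrt (Finset.univ.inf'
        (Finset.univ_nonempty_iff.2 ⟨⟨0, hK⟩⟩) (fun j => ‖h j‖ ^ 2 * P j)) /
      Real.sqrt (Finset.univ.inf'
        (Finset.univ_nonempty_iff.2 ⟨⟨0, hK⟩⟩) (fun j => ‖h j‖ ^ 2 * β j * P j))) *
      Real.sqrt (2 * Real.log (1.25 / δ)) :=
  stmt_3_general K hK h P β σm2 hσ δ βmin mmin hβmin hβlb hmmin hmlb εk hεk
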